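/- Assume Setting (S) with |G| = 2, say G = {0, e}, and suppose no D_ν is factorial. Let j ∈ [1,n]. (1) If s_j = 1 and a, b ∈ D_j ∩ A(B), then b = ε a for some ε ∈ D̂_j^×. (2) If s_j ≥ 2 and a ∈ D_j ∩ B with a ≠ 1, then min L_B(a) ≤ 3 in case d_j = 2, and min L_B(a) ≤ 2 otherwise. -/

import Mathlib

namespace ArXivSeminormal

attribute [local instance] Classical.propDecidable

noncomputable section

/-! ### Generic factorization theory in commutative monoids -/

variable {M : Type*} [CommMonoid M]

/-- The set of factorizations of `a` (in the sense of `Z(a)`): multisets of irreducible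
elements of the reduced monoid (modelled by `Associates M`) whose product is the class
of `a`. -/
def Factorizations (a : M) : Set (Multiset (Associates M)) :=
  {z | (∀ x ∈ z, Irreducible x) ∧ z.prod = Associates.mk a}

/-- The set of lengths `L(a)` of an element `a`. -/
def lengthSet (a : M) : Set ℕ :=
  {k | ∃ z ∈ Factorizations a, Multiset.card z = k}

/-- The set of (successive) distances `Δ(L)` of a set `L ⊆ ℕ`. -/
def DeltaSet (L : Set ℕ) : Set ℕ :=
  {d | ∃ k l, k ∈ L ∧ l ∈ L ∧ k < l ∧ (∀ m, k < m → m < l → m ∉ L) ∧ d = l - k}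

/-- The set of distances `Δ(H)` of a monoid `H`. -/
def DeltaMonoid (M : Type*) [CommMonoid M] : Set ℕ :=
  ⋃ a : M, DeltaSet (lengthSet a)

/-- The distance between two factorizations:
`d(z,z') = max (card (z - gcd z z')) (card (z' - gcd z z'))`. -/
def factorDist (z z' : Multiset (Associates M)) : ℕ :=
  max (Multiset.card (z - z')) (Multiset.card (z' - z))

/-- The catenary degree `c(H)` of a monoid `H`: the smallest `N ∈ ℕ∞` such that any two
factorizations of any element are connected by a chain of factorizations with consecutive
distances at most `N`. -/
def catenaryDegree (M : Type*) [CommMonoid M] : ℕ∞ :=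
  sInf {N : ℕ∞ | ∀ (a : M), ∀ z ∈ Factorizations a, ∀ z' ∈ Factorizations a,
    ∃ c : List (Multiset (Associates M)), c.head? = some z ∧ c.getLast? = some z' ∧
      (∀ w ∈ c, w ∈ Factorizations a) ∧
      List.Chain' (fun u v => (factorDist u v : ℕ∞) ≤ N) c}

/-- A monoid is factorial if every element has a unique factorization. -/
def IsFactorialMonoid (M : Type*) [CommMonoid M] : Prop :=
  ∀ a : M, ∃! z : Multiset (Associates M), z ∈ Factorizations a

/-! ### Free commutative monoids, block monoids, Davenport constant -/

/-- The free abelian (multiplicatively written) monoid on a set `P`. -/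
abbrev FreeCM (P : Type*) := Multiplicative (Multiset P)

/-- The sum homomorphism `σ : F(G) → G`. -/
def sigmaHom (G : Type*) [AddCommMonoid G] : FreeCM G →* Multiplicative G :=
  AddMonoidHom.toMultiplicative
    { toFun := Multiset.sum
      map_zero' := Multiset.sum_zero
      map_add' := Multiset.sum_add }

/-- The monoid of zero-sum sequences over `G`. -/
def BlockMonoid (G : Type*) [AddCommMonoid G] : Submonoid (FreeCM G) :=
  MonoidHom.mker (sigmaHom G)

/-- The Davenport constant of `G`: the supremum of lengths of minimal zero-sum sequences. -/
def Davenport (G : Type*) [AddCommMonoid G] : ℕ :=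
  sSup {k | ∃ u : BlockMonoid G, Irreducible u ∧
    Multiset.card (Multiplicative.toAdd (u : FreeCM G)) = k}

/-! ### Reduced seminormal finitely primary monoids -/

/-- The `Fin s →₀ ℕ` function with all values `1`, i.e. the exponent vector of
`q_1 ⋯ q_s`. -/
def allOnes (s : ℕ) : Fin s →₀ ℕ := Finsupp.equivFunOnFinite.symm fun _ => 1

/-- The reduced seminormal finitely primary monoid of rank `s` with unit group `U` of the
complete integral closure:
`D = {ε q_1^{k_1} ⋯ q_s^{k_s} : ε ∈ U, all k_j ≥ 1} ∪ {1} ⊆ U × [q_1,…,q_s]`. -/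
def seminormalD (U : Type*) [CommGroup U] (s : ℕ) :
    Submonoid (U × Multiplicative (Fin s →₀ ℕ)) where
  carrier := {x | x = 1 ∨ ∀ j, 1 ≤ Multiplicative.toAdd x.2 j}
  one_mem' := Or.inl rfl
  mul_mem' := by
    rintro a b (rfl | ha) (rfl | hb)
    · exact Or.inl (mul_one 1)
    · rw [Set.mem_setOf_eq, one_mul]; exact Or.inr hb
    · rw [Set.mem_setOf_eq, mul_one]; exact Or.inr ha
    · refine Or.inr fun j => ?_
      have h1 := ha j
      have h2 := hb j
      have h3 : Multiplicative.toAdd ((a * b).2) j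
          = Multiplicative.toAdd a.2 j + Multiplicative.toAdd b.2 j := rfl
      omega

/-! ### T-block monoids (Setting (S)) -/

/-- The monoid `T = D_1 × ⋯ × D_n`. -/
abbrev Tm {n : ℕ} (U : Fin n → Type*) [∀ i, CommGroup (U i)] (s : Fin n → ℕ) :=
  ∀ i, ↥(seminormalD (U i) (s i))

/-- The monoid `D̂_1 × ⋯ × D̂_n`. -/
abbrev HatTm {n : ℕ} (U : Fin n → Type*) [∀ i, CommGroup (U i)] (s : Fin n → ℕ) :=
  ∀ i, U i × Multiplicative (Fin (s i) →₀ ℕ)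

/-- The monoid `F = F(G) × T`. -/
abbrev Fm (G : Type*) {n : ℕ} (U : Fin n → Type*) [∀ i, CommGroup (U i)] (s : Fin n → ℕ) :=
  FreeCM G × Tm U s

/-- The homomorphism `F → G`, `S·t ↦ σ(S) + ι(t)`, whose kernel is the `T`-block monoid;
it computes the class `[a] ∈ G ≅ q(F)/q(B)` of `a ∈ F`. -/
def TBlockPhi (G : Type*) [AddCommGroup G] {n : ℕ} (U : Fin n → Type*) [∀ i, CommGroup (U i)]
    (s : Fin n → ℕ) (iota : Tm U s →* Multiplicative G) : Fm G U s →* Multiplicative G :=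
  ((sigmaHom G).comp (MonoidHom.fst _ _)) * (iota.comp (MonoidHom.snd _ _))

/-- The `T`-block monoid `B = B(G, T, ι) = {S·t ∈ F(G) × T : σ(S) + ι(t) = 0}`. -/
def TBlock (G : Type*) [AddCommGroup G] {n : ℕ} (U : Fin n → Type*) [∀ i, CommGroup (U i)]
    (s : Fin n → ℕ) (iota : Tm U s →* Multiplicative G) : Submonoid (Fm G U s) :=
  MonoidHom.mker (TBlockPhi G U s iota)

/-- The inclusion `T = D_1 × ⋯ × D_n → D̂_1 × ⋯ × D̂_n`. -/
def embedT {n : ℕ} (U : Fin n → Type*) [∀ i, CommGroup (U i)] (s : Fin n → ℕ) :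
    Tm U s →* HatTm U s :=
  Pi.monoidHom fun i => (seminormalD (U i) (s i)).subtype.comp
    (Pi.evalMonoidHom (fun j => ↥(seminormalD (U j) (s j))) i)

/-- The norm `‖A‖ = k + 2·Σ_i max L_{D_i}(a_i)` of `A = g_1⋯g_k a_1⋯a_n ∈ F`. -/
def normF (G : Type*) {n : ℕ} (U : Fin n → Type*) [∀ i, CommGroup (U i)] (s : Fin n → ℕ)
    (A : Fm G U s) : ℕ :=
  Multiset.card (Multiplicative.toAdd A.1) + 2 * ∑ i, sSup (lengthSet (A.2 i))

/-- The class `[ε] ∈ G` of a unit `ε ∈ D̂_ν^×`. -/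
def classOfUnit {G : Type*} [AddCommGroup G] {n : ℕ} (U : Fin n → Type*)
    [∀ i, CommGroup (U i)] (s : Fin n → ℕ) (iotahat : HatTm U s →* Multiplicative G)
    (ν : Fin n) (ε : U ν) : Multiplicative G :=
  iotahat (Pi.mulSingle ν (ε, 1))

/-- The class `[q_{ν,j}] ∈ G` of the prime `q_{ν,j}` of `D̂_ν`. -/
def classOfPrime {G : Type*} [AddCommGroup G] {n : ℕ} (U : Fin n → Type*)
    [∀ i, CommGroup (U i)] (s : Fin n → ℕ) (iotahat : HatTm U s →* Multiplicative G)
    (ν : Fin n) (j : Fin (s ν)) : Multiplicative G :=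
  iotahat (Pi.mulSingle ν (1, Multiplicative.ofAdd (Finsupp.single j 1)))

/-- The quantity `d_ν ∈ {-1, 0, 1, 2}` from Theorem 3.3 (for `G = {0, e}` of order two). -/
def dval {G : Type*} [AddCommGroup G] {n : ℕ} (U : Fin n → Type*) [∀ i, CommGroup (U i)]
    (s : Fin n → ℕ) (iotahat : HatTm U s →* Multiplicative G) (e : G) (ν : Fin n) : ℤ :=
  if (∀ ε : U ν, classOfUnit U s iotahat ν ε = 1) ∧ s ν = 2 ∧
      (Finset.univ.filter fun j : Fin (s ν) =>
        classOfPrime U s iotahat ν j = Multiplicative.ofAdd e).card = 2 then 2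
  else if (∀ ε : U ν, classOfUnit U s iotahat ν ε = 1) ∧ s ν = 1 then 0
  else if (∀ ε : U ν, classOfUnit U s iotahat ν ε = 1) ∧ 2 ≤ s ν ∧
      (Finset.univ.filter fun j : Fin (s ν) =>
        classOfPrime U s iotahat ν j = Multiplicative.ofAdd e).card = 0 then -1
  else 1


/-!
For `G = {0, e}` the class of `ε q_1^{k_1} ⋯ q_s^{k_s} ∈ D_j` is `[ε] + (∑_{[q_i] = e} k_i) e`, so
membership in `B` is a parity condition. `D_j ∩ B` is divisor-closed in the reduced monoid `B`, so
the atoms of `B` lying in `D_j` are the atoms of `D_j ∩ B`. Every element `≠ 1` of `D_j` has all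
exponents positive, so an element with some exponent `1` is an atom; if all units have trivial
class, so is one whose exponents at the (odd number of) primes of class `e` all equal `2`, since a
proper factor would have exponent `1` at each of them, hence class `e`.

(1) If `s_j = 1` and the exponent of `a` is smaller than that of `b`, then `b = a · (b / a)`.

(2) Otherwise the exponent vector of `a` splits as `m + (k - m)` into two such atom patterns with
`m` of even class (a unit of class `e`, if there is one, corrects the parity). The exception is
`s_j = 2` with both primes of class `e` and both exponents odd, i.e. `d_j = 2`; then
`a = ε (q_1 q_2) (q_1^{k_1 - 2} q_2) (q_1 q_2^{k_2 - 2})`.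
-/

theorem irreducible_associates_mk {a : M} (ha : Irreducible a) :
    Irreducible (Associates.mk a) := by
  refine ⟨Associates.isUnit_mk.not.mpr ha.not_isUnit, fun x y h => ?_⟩
  obtain ⟨b, rfl⟩ := Associates.mk_surjective x
  obtain ⟨c, rfl⟩ := Associates.mk_surjective y
  rw [Associates.mk_mul_mk, Associates.mk_eq_mk_iff_associated] at h
  obtain ⟨u, hu⟩ := h.symm
  rw [mul_assoc] at hu
  simpa only [Associates.isUnit_mk, Units.isUnit_mul_units] using ha.isUnit_or_isUnit hu.symm

def FactorsIntoAtMost (a : M) (k : ℕ) : Prop :=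
  ∃ p : Multiset M, (∀ x ∈ p, Irreducible x) ∧ p.prod = a ∧ Multiset.card p ≤ k

namespace FactorsIntoAtMost

variable {a : M} {k : ℕ}

theorem of_irreducible (ha : Irreducible a) : FactorsIntoAtMost a 1 :=
  ⟨{a}, by simpa, by simp, by simp⟩

theorem of_irreducible_mul {x y : M} (hx : Irreducible x) (hy : Irreducible y) :
    FactorsIntoAtMost (x * y) 2 :=
  ⟨{x, y}, by simp [hx, hy], by simp, by simp⟩

theorem of_irreducible_mul_mul {x y z : M} (hx : Irreducible x) (hy : Irreducible y)
    (hz : Irreducible z) : FactorsIntoAtMost (x * y * z) 3 :=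
  ⟨{x, y, z}, by simp [hx, hy, hz], by simp [mul_assoc], by simp⟩

theorem mono (h : FactorsIntoAtMost a k) {l : ℕ} (hkl : k ≤ l) : FactorsIntoAtMost a l := by
  obtain ⟨p, hp, hprod, hcard⟩ := h
  exact ⟨p, hp, hprod, hcard.trans hkl⟩

theorem sInf_lengthSet_le (h : FactorsIntoAtMost a k) : sInf (lengthSet a) ≤ k := by
  obtain ⟨p, hp, rfl, hcard⟩ := h
  refine (Nat.sInf_le (show Multiset.card p ∈ lengthSet p.prod from
    ⟨p.map Associates.mk, ⟨fun z hz => ?_, Associates.prod_mk⟩, Multiset.card_map _ _⟩)).trans hcard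
  obtain ⟨x, hx, rfl⟩ := Multiset.mem_map.mp hz
  exact irreducible_associates_mk (hp x hx)

theorem map {N : Type*} [CommMonoid N] {f : M →* N}
    (hf : ∀ x, Irreducible x → Irreducible (f x)) (h : FactorsIntoAtMost a k) :
    FactorsIntoAtMost (f a) k := by
  obtain ⟨p, hp, rfl, hcard⟩ := h
  refine ⟨p.map f, fun y hy => ?_, (map_multiset_prod f p).symm, by rwa [Multiset.card_map]⟩
  obtain ⟨x, hx, rfl⟩ := Multiset.mem_map.mp hy
  exact hf x (hp x hx)

end FactorsIntoAtMost

theorem irreducible_map_of_injective {N : Type*} [CommMonoid N] [Subsingleton Nˣ] {f : M →* N}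
    (hf : Function.Injective f) (hdvd : ∀ x w w', f x = w * w' → w ∈ Set.range f) {x : M}
    (hx : Irreducible x) : Irreducible (f x) := by
  refine ⟨fun h => hx.not_isUnit ?_, fun w w' h => ?_⟩
  · rw [isUnit_iff_eq_one, ← map_one f] at h
    exact hf h ▸ isUnit_one
  · obtain ⟨y, rfl⟩ := hdvd x w w' h
    obtain ⟨z, rfl⟩ := hdvd x w' _ (h.trans (mul_comm _ _))
    rw [← map_mul] at h
    exact (hx.isUnit_or_isUnit (hf h)).imp (IsUnit.map f) (IsUnit.map f)

theorem isLocalHom_of_injective {N : Type*} [Monoid N] [Subsingleton Nˣ] {f : M →* N}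
    (hf : Function.Injective f) : IsLocalHom f :=
  ⟨fun x hx => by
    rw [isUnit_iff_eq_one, ← map_one f] at hx
    exact hf hx ▸ isUnit_one⟩

theorem eq_mk_mulSingle_of_mul_eq [Subsingleton Mˣ] {ι : Type*} [DecidableEq ι] {N : ι → Type*}
    [∀ i, CommMonoid (N i)] [∀ i, Subsingleton (N i)ˣ] {j : ι} {d : N j} {w w' : M × ∀ i, N i}
    (h : w * w' = (1, Pi.mulSingle j d)) : w = (1, Pi.mulSingle j (w.2 j)) := by
  refine Prod.ext (mul_eq_one.mp (congrArg Prod.fst h)).1 (funext fun i => ?_)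
  rcases eq_or_ne i j with rfl | hij
  · simp
  · change w.2 i = Pi.mulSingle j (w.2 j) i
    have hi : w.2 i * w'.2 i = Pi.mulSingle j d i := congrFun (congrArg Prod.snd h) i
    rw [Pi.mulSingle_eq_of_ne hij] at hi ⊢
    exact (mul_eq_one.mp hi).1

section OrderTwo
open Multiplicative
variable {G : Type*} [AddCommGroup G] [Fintype G] {e : G}

theorem eq_one_or_eq_ofAdd (hG : Fintype.card G = 2) (he : e ≠ 0) (g : Multiplicative G) :
    g = 1 ∨ g = ofAdd e := by
  by_contra! h
  have : 2 < Fintype.card G :=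
    Fintype.two_lt_card_iff.mpr ⟨0, e, toAdd g, he.symm,
      fun h' => h.1 (toAdd_eq_zero.mp h'.symm), fun h' => h.2 (by rw [h', ofAdd_toAdd])⟩
  omega

theorem ofAdd_pow_eq_one_iff (hG : Fintype.card G = 2) (he : e ≠ 0) (t : ℕ) :
    (ofAdd e : Multiplicative G) ^ t = 1 ↔ Even t := by
  have h2 : addOrderOf e = 2 := addOrderOf_eq_prime (hG ▸ card_nsmul_eq_zero) he
  rw [← ofAdd_nsmul, ofAdd_eq_one, ← addOrderOf_dvd_iff_nsmul_eq_zero, h2, even_iff_two_dvd]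

theorem prod_pow_eq_ofAdd_pow_sum (hG : Fintype.card G = 2) (he : e ≠ 0) {ι : Type*}
    [Fintype ι] (g : ι → Multiplicative G) (x : ι → ℕ) :
    ∏ i, g i ^ x i = ofAdd e ^ ∑ i ∈ Finset.univ.filter (g · = ofAdd e), x i := by
  rw [← Finset.prod_pow_eq_pow_sum, Finset.prod_filter]
  refine Finset.prod_congr rfl fun i _ => ?_
  rcases eq_one_or_eq_ofAdd hG he (g i) with h | h
  · rw [h, one_pow, if_neg (fun h' => he (by simpa using h'.symm))]
  · rw [h, if_pos rfl]

end OrderTwo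

section Exponents
open Finset Function
variable {ι : Type*} [DecidableEq ι] (E : Finset ι)

/-- The exponent patterns of the two kinds of atoms of `D ∩ B`, where `E` is the set of primes of
class `e`; the second kind is an atom only when all units have trivial class. -/
def IsAtomExponent (m : ι → ℕ) : Prop :=
  (∃ i, m i = 1) ∨ (Odd #E ∧ ∀ i ∈ E, m i = 2)

structure IsEvenSplit (k m : ι → ℕ) : Prop where
  one_le : ∀ i, 1 ≤ m i
  lt : ∀ i, m i < k i
  even_sum : Even (∑ i ∈ E, m i)
  isAtomExponent : IsAtomExponent E m
  isAtomExponent_sub : IsAtomExponent E (k - m)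

theorem sum_update_one (i : ι) (c : ℕ) :
    ∑ l ∈ E, update (1 : ι → ℕ) i c l = if i ∈ E then c + (#E - 1) else #E := by
  split_ifs with hi
  · simp [sum_update_of_mem hi, card_sdiff_of_subset (singleton_subset_iff.mpr hi)]
  · simp [sum_update_of_notMem hi]

theorem sum_update_update_one {a b : ι} (hab : a ≠ b) (ha : a ∈ E) (hb : b ∈ E) (c d : ℕ) :
    ∑ l ∈ E, update (update (1 : ι → ℕ) a c) b d l = d + (c + (#E - 2)) := by
  have ha' : a ∈ E \ {b} := mem_sdiff.mpr ⟨ha, by simpa using hab⟩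
  rw [sum_update_of_mem hb, sum_update_one, if_pos ha',
    card_sdiff_of_subset (singleton_subset_iff.mpr hb), card_singleton]
  omega

theorem exists_ne_ne_of_three_le_card {a : ι} (ha : a ∈ E) (hE : 3 ≤ #E) :
    ∃ b ∈ E, ∃ t, b ≠ a ∧ t ≠ a ∧ t ≠ b := by
  obtain ⟨b, hb⟩ : (E.erase a).Nonempty := by
    rw [← card_pos, card_erase_of_mem ha]; omega
  obtain ⟨t, ht⟩ : ((E.erase a).erase b).Nonempty := by
    rw [← card_pos, card_erase_of_mem hb, card_erase_of_mem ha]; omega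
  exact ⟨b, mem_of_mem_erase hb, t, ne_of_mem_erase hb, ne_of_mem_erase (mem_of_mem_erase ht),
    ne_of_mem_erase ht⟩

variable {E} {k : ι → ℕ}

theorem isEvenSplit_update_one [Fintype ι] (hι : 2 ≤ Fintype.card ι) (hk : ∀ l, 2 ≤ k l)
    {i : ι} {c : ℕ} (hc : 1 ≤ c) (hck : c < k i)
    (heven : Even (∑ l ∈ E, update (1 : ι → ℕ) i c l))
    (hsub : IsAtomExponent E (k - update (1 : ι → ℕ) i c)) :
    IsEvenSplit E k (update (1 : ι → ℕ) i c) := by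
  obtain ⟨l, hl⟩ := Fintype.exists_ne_of_one_lt_card hι i
  refine ⟨fun l => ?_, fun l => ?_, heven, Or.inl ⟨l, by simp [hl]⟩, hsub⟩
  · rcases eq_or_ne l i with rfl | hli <;> simp [*]
  · have := hk l
    rcases eq_or_ne l i with rfl | hli <;> simp [*]
    omega

theorem isEvenSplit_update_update_one (hk : ∀ l, 2 ≤ k l) {a b t : ι} (hab : a ≠ b)
    (hta : t ≠ a) (htb : t ≠ b) {c : ℕ} (hc : 1 ≤ c) (hck : c < k a)
    (heven : Even (∑ l ∈ E, update (update (1 : ι → ℕ) a c) b (k b - 1) l)) :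
    IsEvenSplit E k (update (update (1 : ι → ℕ) a c) b (k b - 1)) := by
  have hkb := hk b
  refine ⟨fun l => ?_, fun l => ?_, heven, Or.inl ⟨t, by simp [hta, htb]⟩,
    Or.inl ⟨b, by simp; omega⟩⟩ <;>
  · have := hk l
    rcases eq_or_ne l b with rfl | hlb
    · simp
      omega
    · rcases eq_or_ne l a with rfl | hla <;> simp [*] <;> omega

theorem exists_isEvenSplit_of_odd_card [Fintype ι] (hι : 2 ≤ Fintype.card ι)
    (hk : ∀ i, 2 ≤ k i) (hE : Odd #E) (hkE : ∀ i ∈ E, Even (k i)) (hk2 : ∃ a ∈ E, k a ≠ 2) :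
    ∃ m, IsEvenSplit E k m := by
  obtain ⟨a, ha, hka⟩ := hk2
  have hka4 : 4 ≤ k a := by
    have := hk a
    have := Nat.even_iff.mp (hkE a ha)
    omega
  by_cases hE1 : #E = 1
  · have hEa : E = {a} := by
      obtain ⟨x, rfl⟩ := card_eq_one.mp hE1
      rw [mem_singleton.mp ha]
    refine ⟨_, isEvenSplit_update_one hι hk (i := a) (c := k a - 2) (by omega) (by omega) ?_
      (Or.inr ⟨hE, fun i hi => ?_⟩)⟩
    · rw [sum_update_one, if_pos ha, hE1, Nat.even_iff]
      have := Nat.even_iff.mp (hkE a ha)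
      omega
    · rw [hEa, mem_singleton] at hi
      subst hi
      simp
      omega
  · obtain ⟨b, hb, t, hba, hta, htb⟩ :=
      exists_ne_ne_of_three_le_card E ha (by rw [Nat.odd_iff] at hE; omega)
    refine ⟨_, isEvenSplit_update_update_one hk hba.symm hta htb (c := 2) (by omega)
      (by omega) ?_⟩
    rw [sum_update_update_one E hba.symm ha hb]
    have := Nat.even_iff.mp (hkE b hb)
    have := hk b
    rw [Nat.odd_iff] at hE
    rw [Nat.even_iff]
    omega

theorem exists_isEvenSplit_of_eq_univ [Fintype ι] (hι : 3 ≤ Fintype.card ι)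
    (hk : ∀ i, 2 ≤ k i) (hk' : ∀ i, Odd (k i)) (hE : Even (Fintype.card ι)) :
    ∃ m, IsEvenSplit univ k m := by
  obtain ⟨a⟩ := Fintype.card_pos_iff.mp (by omega : 0 < Fintype.card ι)
  obtain ⟨b, -, t, hba, hta, htb⟩ :=
    exists_ne_ne_of_three_le_card univ (mem_univ a) (by rwa [card_univ])
  have := hk a
  refine ⟨_, isEvenSplit_update_update_one hk hba.symm hta htb (c := k a - 1)
    (by omega) (by omega) ?_⟩
  rw [sum_update_update_one univ hba.symm (mem_univ a) (mem_univ b), card_univ]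
  have := Nat.odd_iff.mp (hk' a)
  have := Nat.odd_iff.mp (hk' b)
  have := hk b
  rw [Nat.even_iff] at hE ⊢
  omega

theorem exists_isEvenSplit [Fintype ι] (hι : 2 ≤ Fintype.card ι) (hk : ∀ i, 2 ≤ k i)
    (hk2 : ¬ (Odd #E ∧ ∀ i ∈ E, k i = 2))
    (hexc : ¬ (Fintype.card ι = 2 ∧ E = univ ∧ ∀ i, Odd (k i))) :
    ∃ m, IsEvenSplit E k m := by
  -- the first factor is `q_i^{k_i - 1} ∏_{l ≠ i} q_l`, the second then has exponent `1` at `i`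
  have single (i : ι) (h : Even (∑ l ∈ E, update (1 : ι → ℕ) i (k i - 1) l)) :
      ∃ m, IsEvenSplit E k m := by
    have := hk i
    exact ⟨_, isEvenSplit_update_one hι hk (by omega) (by omega) h
      (Or.inl ⟨i, by simp; omega⟩)⟩
  by_cases hout : ∃ i ∉ E, Even #E
  · obtain ⟨i, hi, hE⟩ := hout
    exact single i (by rwa [sum_update_one, if_neg hi])
  by_cases hin : ∃ i ∈ E, Even (k i + #E)
  · obtain ⟨i, hi, hki⟩ := hin
    refine single i ?_
    rw [sum_update_one, if_pos hi, Nat.even_iff]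
    rw [Nat.even_iff] at hki
    have := hk i
    have := card_pos.mpr ⟨i, hi⟩
    omega
  push Not at hout hin
  rcases Nat.even_or_odd #E with hE | hE
  · obtain rfl : E = univ := eq_univ_of_forall fun i => by_contra fun hi => hout i hi hE
    have hodd (i : ι) : Odd (k i) := by
      have := Nat.even_iff.not.mp (hin i (mem_univ i))
      rw [Nat.even_iff] at hE
      rw [Nat.odd_iff]
      omega
    rw [card_univ] at hE
    exact exists_isEvenSplit_of_eq_univ (lt_of_le_of_ne hι fun h => hexc ⟨h.symm, rfl, hodd⟩)
      hk hodd hE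
  · refine exists_isEvenSplit_of_odd_card hι hk hE (fun i hi => ?_) ?_
    · have := Nat.even_iff.not.mp (hin i hi)
      rw [Nat.odd_iff] at hE
      rw [Nat.even_iff]
      omega
    · by_contra! h
      exact hk2 ⟨hE, h⟩

end Exponents

section LocalBlock
open Multiplicative Finset
variable {G : Type*} [AddCommGroup G] {V : Type*} [CommGroup V] {r : ℕ}

theorem eq_one_of_mul_eq_one_of_mem_seminormalD [NeZero r]
    {x y : V × Multiplicative (Fin r →₀ ℕ)} (hx : x ∈ seminormalD V r) (h : x * y = 1) :
    x = 1 := by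
  refine hx.resolve_right fun hx => ?_
  have h0 : toAdd x.2 0 + toAdd y.2 0 = 0 :=
    congrArg (fun z : V × Multiplicative (Fin r →₀ ℕ) => toAdd z.2 0) h
  have := hx 0
  omega

instance [NeZero r] : Subsingleton (seminormalD V r)ˣ :=
  subsingleton_of_forall_eq 1 fun u => Units.ext <| Subtype.ext <|
    eq_one_of_mul_eq_one_of_mem_seminormalD u.val.2 (congrArg Subtype.val u.mul_inv)

variable (χ : V × Multiplicative (Fin r →₀ ℕ) →* Multiplicative G)

/-- `D ∩ B` for a single factor `D`, where `χ` is the class map `D̂ → G` -/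
def localBlock : Submonoid (V × Multiplicative (Fin r →₀ ℕ)) :=
  seminormalD V r ⊓ MonoidHom.mker χ

instance [NeZero r] : Subsingleton (localBlock χ)ˣ :=
  (Units.map_injective (Submonoid.inclusion_injective inf_le_left)).subsingleton

def primesOfClass (g : Multiplicative G) : Finset (Fin r) :=
  univ.filter fun i => χ (1, ofAdd (Finsupp.single i 1)) = g

theorem map_eq_mul_pow_sum [Fintype G] (hG : Fintype.card G = 2) {e : G} (he : e ≠ 0)
    (x : V × Multiplicative (Fin r →₀ ℕ)) :
    χ x = χ (x.1, 1) * ofAdd e ^ ∑ i ∈ primesOfClass χ (ofAdd e), toAdd x.2 i := by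
  have hx : x = (x.1, 1) *
      MonoidHom.inr V _ (ofAdd (∑ i, (toAdd x.2 i) • Finsupp.single i 1)) := by
    simp [Finsupp.univ_sum_single]
  conv_lhs => rw [hx]
  rw [map_mul, ← MonoidHom.comp_apply, ofAdd_sum, map_prod]
  simp only [ofAdd_nsmul, map_pow, MonoidHom.comp_apply, MonoidHom.inr_apply]
  rw [prod_pow_eq_ofAdd_pow_sum hG he]
  rfl

variable {χ}

theorem one_le_exponent {x : localBlock χ} (hx : x ≠ 1) (i : Fin r) : 1 ≤ toAdd x.1.2 i :=
  (x.2.1.resolve_left fun h => hx (Subtype.ext h)) i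

theorem exponent_mul (x y : localBlock χ) (i : Fin r) :
    toAdd (x * y).1.2 i = toAdd x.1.2 i + toAdd y.1.2 i := rfl

theorem ne_one_of_exponent_ne_zero {x : localBlock χ} {i : Fin r} (hi : toAdd x.1.2 i ≠ 0) :
    x ≠ 1 := by
  rintro rfl
  exact hi rfl

theorem exists_mul_eq_of_exponent_lt {x : V × Multiplicative (Fin r →₀ ℕ)}
    (hx : x ∈ localBlock χ) {a : localBlock χ} (hlt : ∀ i, toAdd x.2 i < toAdd a.1.2 i) :
    ∃ y : localBlock χ, ⟨x, hx⟩ * y = a ∧ ∀ i, toAdd y.1.2 i = toAdd a.1.2 i - toAdd x.2 i := by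
  set y : V × Multiplicative (Fin r →₀ ℕ) := (a.1.1 * x.1⁻¹, ofAdd (toAdd a.1.2 - toAdd x.2))
  have hxy : x * y = a.1 := Prod.ext (mul_inv_cancel_comm_assoc ..) <| by
    change ofAdd (toAdd x.2 + (toAdd a.1.2 - toAdd x.2)) = a.1.2
    rw [add_tsub_cancel_of_le (Finsupp.le_def.mpr fun i => (hlt i).le), ofAdd_toAdd]
  have hyD : y ∈ seminormalD V r := Or.inr fun i => by
    change 1 ≤ (toAdd a.1.2 - toAdd x.2) i
    rw [Finsupp.tsub_apply]
    have := hlt i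
    omega
  have hyχ : χ y = 1 := by
    have hxχ : χ x = 1 := hx.2
    have haχ : χ a.1 = 1 := a.2.2
    simpa only [map_mul, hxχ, one_mul, haχ] using congrArg χ hxy
  exact ⟨⟨y, hyD, hyχ⟩, Subtype.ext hxy, fun i => Finsupp.tsub_apply _ _ _⟩

theorem exists_mul_eq_of_exponents [Fintype G] (hG : Fintype.card G = 2) {e : G} (he : e ≠ 0)
    (a : localBlock χ) (β : V) {m : Fin r → ℕ} (hm1 : ∀ i, 1 ≤ m i)
    (hmk : ∀ i, m i < toAdd a.1.2 i)
    (hβ : χ (β, 1) * ofAdd e ^ ∑ i ∈ primesOfClass χ (ofAdd e), m i = 1) :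
    ∃ x y : localBlock χ, x * y = a ∧ ⇑(toAdd x.1.2) = m ∧
      ⇑(toAdd y.1.2) = ⇑(toAdd a.1.2) - m := by
  set x : V × Multiplicative (Fin r →₀ ℕ) := (β, ofAdd (Finsupp.equivFunOnFinite.symm m))
  have hxm : ⇑(toAdd x.2) = m := Finsupp.coe_equivFunOnFinite_symm m
  have hx : x ∈ localBlock χ := by
    refine ⟨Or.inr fun i => hxm ▸ hm1 i, ?_⟩
    change χ x = 1
    rwa [map_eq_mul_pow_sum χ hG he, hxm]
  obtain ⟨y, hxy, hy⟩ := exists_mul_eq_of_exponent_lt hx fun i => hxm ▸ hmk i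
  exact ⟨_, y, hxy, hxm, funext fun i => by rw [hy, hxm]; rfl⟩

theorem exists_unit_map_mul_pow_eq_one [Fintype G] (hG : Fintype.card G = 2) {e : G}
    (he : e ≠ 0) {η : V} (hη : χ (η, 1) ≠ 1) (t : ℕ) : ∃ β : V, χ (β, 1) * ofAdd e ^ t = 1 := by
  by_cases ht : Even t
  · exact ⟨1, by rw [Prod.mk_one_one, map_one, one_mul, ofAdd_pow_eq_one_iff hG he]; exact ht⟩
  · refine ⟨η, ?_⟩
    rw [(eq_one_or_eq_ofAdd hG he _).resolve_left hη, ← pow_succ', ofAdd_pow_eq_one_iff hG he]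
    exact (Nat.not_even_iff_odd.mp ht).add_one

section Reduced
variable [NeZero r]

theorem not_irreducible_of_exponent_lt {x y : localBlock χ} (hx : x ≠ 1)
    (hlt : ∀ i, toAdd x.1.2 i < toAdd y.1.2 i) : ¬ Irreducible y := by
  intro hy
  obtain ⟨z, hxz, hz⟩ := exists_mul_eq_of_exponent_lt x.2 hlt
  have hz1 : z ≠ 1 := ne_one_of_exponent_ne_zero (i := 0) (by rw [hz]; have := hlt 0; omega)
  rcases hy.isUnit_or_isUnit hxz.symm with h | h <;> rw [isUnit_iff_eq_one] at h
  exacts [hx h, hz1 h]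

theorem irreducible_of_exponent_eq_one {x : localBlock χ} {i : Fin r}
    (hi : toAdd x.1.2 i = 1) : Irreducible x := by
  refine ⟨fun hu => ne_one_of_exponent_ne_zero (i := i) (by omega) (isUnit_iff_eq_one.mp hu),
    fun y z h => ?_⟩
  simp only [isUnit_iff_eq_one]
  by_contra! hyz
  have := one_le_exponent hyz.1 i
  have := one_le_exponent hyz.2 i
  rw [h, exponent_mul] at hi
  omega

theorem irreducible_of_exponent_eq_two [Fintype G] (hG : Fintype.card G = 2) {e : G}
    (he : e ≠ 0) (huc : ∀ ε, χ (ε, 1) = 1) (hE : Odd #(primesOfClass χ (ofAdd e)))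
    {x : localBlock χ} (hx : ∀ i ∈ primesOfClass χ (ofAdd e), toAdd x.1.2 i = 2) :
    Irreducible x := by
  obtain ⟨i₀, hi₀⟩ := card_pos.mp hE.pos
  refine ⟨fun hu => ne_one_of_exponent_ne_zero (i := i₀) (by simp [hx i₀ hi₀])
    (isUnit_iff_eq_one.mp hu), fun y z h => ?_⟩
  simp only [isUnit_iff_eq_one]
  by_contra! hyz
  have hy1 : ∀ i ∈ primesOfClass χ (ofAdd e), toAdd y.1.2 i = 1 := fun i hi => by
    have := one_le_exponent hyz.1 i
    have := one_le_exponent hyz.2 i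
    have := hx i hi
    rw [h, exponent_mul] at this
    omega
  have hyχ : χ y.1 = 1 := y.2.2
  rw [map_eq_mul_pow_sum χ hG he, huc, one_mul, sum_congr rfl hy1,
    sum_const, smul_eq_mul, mul_one, ofAdd_pow_eq_one_iff hG he] at hyχ
  exact Nat.not_even_iff_odd.mpr hE hyχ

theorem irreducible_of_isAtomExponent [Fintype G] (hG : Fintype.card G = 2) {e : G}
    (he : e ≠ 0) (huc : ∀ ε, χ (ε, 1) = 1) {x : localBlock χ}
    (hx : IsAtomExponent (primesOfClass χ (ofAdd e)) ⇑(toAdd x.1.2)) : Irreducible x :=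
  hx.elim (fun ⟨_, hi⟩ => irreducible_of_exponent_eq_one hi)
    fun ⟨hE, h2⟩ => irreducible_of_exponent_eq_two hG he huc hE h2

theorem factorsIntoAtMost_two_of_isEvenSplit [Fintype G] (hG : Fintype.card G = 2) {e : G}
    (he : e ≠ 0) (huc : ∀ ε, χ (ε, 1) = 1) {a : localBlock χ} {m : Fin r → ℕ}
    (hm : IsEvenSplit (primesOfClass χ (ofAdd e)) ⇑(toAdd a.1.2) m) :
    FactorsIntoAtMost a 2 := by
  obtain ⟨x, y, rfl, hx, hy⟩ := exists_mul_eq_of_exponents hG he a 1 hm.one_le hm.lt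
    (by rw [huc, one_mul, ofAdd_pow_eq_one_iff hG he]; exact hm.even_sum)
  exact .of_irreducible_mul (irreducible_of_isAtomExponent hG he huc (hx ▸ hm.isAtomExponent))
    (irreducible_of_isAtomExponent hG he huc (hy ▸ hm.isAtomExponent_sub))

end Reduced

theorem exists_eq_mul_of_irreducible (hr : r = 1) {x y : localBlock χ} (hx : Irreducible x)
    (hy : Irreducible y) :
    ∃ ε : V, (y : V × Multiplicative (Fin r →₀ ℕ)) = (ε, 1) * (x : V × _) := by
  have : NeZero r := ⟨by omega⟩
  have hall (i : Fin r) : i = 0 := Fin.ext (by have := i.2; omega)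
  rcases lt_trichotomy (toAdd x.1.2 0) (toAdd y.1.2 0) with h | h | h
  · exact (not_irreducible_of_exponent_lt hx.ne_one (fun i => hall i ▸ h) hy).elim
  · refine ⟨y.1.1 * x.1.1⁻¹, Prod.ext (inv_mul_cancel_right _ _).symm ?_⟩
    rw [Prod.snd_mul, one_mul, ← ofAdd_toAdd y.1.2, ← ofAdd_toAdd x.1.2]
    exact congrArg ofAdd (Finsupp.ext fun i => hall i ▸ h.symm)
  · exact (not_irreducible_of_exponent_lt hy.ne_one (fun i => hall i ▸ h) hx).elim

theorem factorsIntoAtMost_two_of_map_ne_one [Fintype G] (hG : Fintype.card G = 2) {e : G}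
    (he : e ≠ 0) (hr : 2 ≤ r) {a : localBlock χ} (hk : ∀ i, 2 ≤ toAdd a.1.2 i) {η : V}
    (hη : χ (η, 1) ≠ 1) : FactorsIntoAtMost a 2 := by
  have : NeZero r := ⟨by omega⟩
  let i₀ : Fin r := ⟨0, by omega⟩
  let i₁ : Fin r := ⟨1, by omega⟩
  have hi : i₁ ≠ i₀ := by simp [i₀, i₁, Fin.ext_iff]
  set m := Function.update (1 : Fin r → ℕ) i₀ (toAdd a.1.2 i₀ - 1)
  have := hk i₀
  obtain ⟨β, hβ⟩ := exists_unit_map_mul_pow_eq_one hG he hη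
    (∑ i ∈ primesOfClass χ (ofAdd e), m i)
  obtain ⟨x, y, hxy, hx, hy⟩ := exists_mul_eq_of_exponents hG he a β (m := m)
    (fun i => by rcases eq_or_ne i i₀ with h | h <;> simp [m, h]; omega)
    (fun i => by have := hk i; rcases eq_or_ne i i₀ with h | h <;> simp [m, h] <;> omega)
    hβ
  rw [← hxy]
  refine .of_irreducible_mul (irreducible_of_exponent_eq_one (i := i₁) ?_)
    (irreducible_of_exponent_eq_one (i := i₀) ?_)
  · simp [hx, m, hi]
  · simp [hy, m]
    omega

theorem factorsIntoAtMost_three_of_odd [Fintype G] (hG : Fintype.card G = 2) {e : G}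
    (he : e ≠ 0) (huc : ∀ ε, χ (ε, 1) = 1) (hr : r = 2) (hE : primesOfClass χ (ofAdd e) = univ)
    {a : localBlock χ} (hk : ∀ i, 3 ≤ toAdd a.1.2 i) (hodd : ∀ i, Odd (toAdd a.1.2 i)) :
    FactorsIntoAtMost a 3 := by
  subst hr
  have h0 := hk 0
  have h1 := hk 1
  have hodd0 := Nat.odd_iff.mp (hodd 0)
  obtain ⟨x, a', hxa, hx, ha'⟩ := exists_mul_eq_of_exponents hG he a 1 (m := 1)
    (fun _ => le_rfl) (fun i => by have := hk i; simp; omega)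
    (by rw [huc, one_mul, hE, ofAdd_pow_eq_one_iff hG he]; simp)
  obtain ⟨y, z, hyz, hy, hz⟩ := exists_mul_eq_of_exponents hG he a' 1
    (m := Function.update 1 0 (toAdd a.1.2 0 - 2))
    (fun i => by fin_cases i <;> simp; omega)
    (fun i => by fin_cases i <;> simp [ha'] <;> omega)
    (by
      rw [huc, one_mul, hE, sum_update_one, if_pos (mem_univ _), ofAdd_pow_eq_one_iff hG he]
      simp only [card_univ, Fintype.card_fin, Nat.even_iff]
      omega)
  rw [← hxa, ← hyz, ← mul_assoc]
  exact .of_irreducible_mul_mul (irreducible_of_exponent_eq_one (i := 0) (by simp [hx]))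
    (irreducible_of_exponent_eq_one (i := 1) (by simp [hy]))
    (irreducible_of_exponent_eq_one (i := 0) (by simp [hz, ha']; omega))

theorem factorsIntoAtMost_of_ne_one [Fintype G] (hG : Fintype.card G = 2) {e : G} (he : e ≠ 0)
    (hr : 2 ≤ r) {a : localBlock χ} (ha : a ≠ 1) :
    FactorsIntoAtMost a
      (if (∀ ε, χ (ε, 1) = 1) ∧ r = 2 ∧ #(primesOfClass χ (ofAdd e)) = 2 then 3 else 2) := by
  have : NeZero r := ⟨by omega⟩
  set E := primesOfClass χ (ofAdd e)
  have h2 : 2 ≤ if (∀ ε, χ (ε, 1) = 1) ∧ r = 2 ∧ #E = 2 then 3 else 2 := by split_ifs <;> omega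
  by_cases h1 : ∃ i, toAdd a.1.2 i = 1
  · exact (FactorsIntoAtMost.of_irreducible (irreducible_of_exponent_eq_one h1.choose_spec)).mono
      (by omega)
  have hk (i : Fin r) : 2 ≤ toAdd a.1.2 i := by
    have := one_le_exponent ha i
    have := not_exists.mp h1 i
    omega
  by_cases huc : ∀ ε, χ (ε, 1) = 1
  swap
  · push Not at huc
    exact (factorsIntoAtMost_two_of_map_ne_one hG he hr hk huc.choose_spec).mono h2
  by_cases hE2 : Odd #E ∧ ∀ i ∈ E, toAdd a.1.2 i = 2
  · exact (FactorsIntoAtMost.of_irreducible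
      (irreducible_of_exponent_eq_two hG he huc hE2.1 hE2.2)).mono (by omega)
  by_cases hexc : r = 2 ∧ E = univ ∧ ∀ i, Odd (toAdd a.1.2 i)
  · rw [if_pos ⟨huc, hexc.1, by rw [hexc.2.1, card_univ, Fintype.card_fin, hexc.1]⟩]
    exact factorsIntoAtMost_three_of_odd hG he huc hexc.1 hexc.2.1
      (fun i => by have := hk i; have := Nat.odd_iff.mp (hexc.2.2 i); omega) hexc.2.2
  · obtain ⟨m, hm⟩ := exists_isEvenSplit (by simpa using hr) hk hE2 (by simpa using hexc)
    exact (factorsIntoAtMost_two_of_isEvenSplit hG he huc hm).mono h2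

end LocalBlock

section TBlock
open Multiplicative Finset
variable {G : Type*} [AddCommGroup G] {n : ℕ} {U : Fin n → Type*} [∀ i, CommGroup (U i)]
  {s : Fin n → ℕ} (iotahat : HatTm U s →* Multiplicative G) (j : Fin n)

abbrev localClass : U j × Multiplicative (Fin (s j) →₀ ℕ) →* Multiplicative G :=
  iotahat.comp (MonoidHom.mulSingle (fun i => U i × Multiplicative (Fin (s i) →₀ ℕ)) j)

theorem embedT_mulSingle (d : seminormalD (U j) (s j)) :
    embedT U s (Pi.mulSingle j d) =
      Pi.mulSingle j (d : U j × Multiplicative (Fin (s j) →₀ ℕ)) :=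
  funext fun i => by
    exact Pi.apply_mulSingle (fun i (x : seminormalD (U i) (s i)) => x.val) (fun _ => rfl) j d i

theorem mk_mulSingle_mem_TBlock_iff (d : seminormalD (U j) (s j)) :
    ((1 : FreeCM G), Pi.mulSingle j d) ∈ TBlock G U s (iotahat.comp (embedT U s)) ↔
      localClass iotahat j d = 1 := by
  rw [TBlock, MonoidHom.mem_mker, TBlockPhi, MonoidHom.mul_apply]
  simp [embedT_mulSingle]

theorem mem_localBlock_of_mk_mulSingle_mem {d : seminormalD (U j) (s j)}
    (h : ((1 : FreeCM G), Pi.mulSingle j d) ∈ TBlock G U s (iotahat.comp (embedT U s))) :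
    (d : U j × Multiplicative (Fin (s j) →₀ ℕ)) ∈ localBlock (localClass iotahat j) := by
  have := (mk_mulSingle_mem_TBlock_iff iotahat j d).mp h
  exact ⟨d.2, this⟩

theorem dval_eq_two {e : G} (h : (∀ ε, localClass iotahat j (ε, 1) = 1) ∧ s j = 2 ∧
      #(primesOfClass (localClass iotahat j) (ofAdd e)) = 2) :
    dval U s iotahat e j = 2 := by
  unfold dval
  exact if_pos h

def toTBlock :
    localBlock (localClass iotahat j) →* TBlock G U s (iotahat.comp (embedT U s)) :=
  ((MonoidHom.inr (FreeCM G) (Tm U s)).comp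
      ((MonoidHom.mulSingle _ j).comp (Submonoid.inclusion inf_le_left))).codRestrict _
    fun x => (mk_mulSingle_mem_TBlock_iff iotahat j _).mpr x.2.2

theorem toTBlock_injective : Function.Injective (toTBlock iotahat j) := fun _ _ h =>
  ((Prod.mk_right_injective 1).comp
    ((Pi.mulSingle_injective j).comp (Submonoid.inclusion_injective _))) (congrArg Subtype.val h)

theorem mem_range_toTBlock_of_mul_eq [∀ i, NeZero (s i)] {x : localBlock (localClass iotahat j)}
    {w w' : TBlock G U s (iotahat.comp (embedT U s))} (h : toTBlock iotahat j x = w * w') :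
    w ∈ Set.range (toTBlock iotahat j) := by
  have hw := eq_mk_mulSingle_of_mul_eq (congrArg Subtype.val h).symm
  have hwB : ((1 : FreeCM G), Pi.mulSingle j ((w : Fm G U s).2 j)) ∈
      TBlock G U s (iotahat.comp (embedT U s)) := hw ▸ w.2
  exact ⟨⟨_, mem_localBlock_of_mk_mulSingle_mem iotahat j hwB⟩, Subtype.ext hw.symm⟩

theorem irreducible_toTBlock_iff [∀ i, NeZero (s i)] {x : localBlock (localClass iotahat j)} :
    Irreducible (toTBlock iotahat j x) ↔ Irreducible x :=
  have := isLocalHom_of_injective (toTBlock_injective iotahat j)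
  ⟨Irreducible.of_map, irreducible_map_of_injective (toTBlock_injective iotahat j)
    fun _ _ _ => mem_range_toTBlock_of_mul_eq iotahat j⟩

end TBlock

theorem tblock_order_two_local_lengths_general
    {G : Type*} [AddCommGroup G] [Fintype G] (hcard : Fintype.card G = 2)
    (e : G) (he : e ≠ 0)
    {n : ℕ} (U : Fin n → Type*) [∀ i, CommGroup (U i)]
    (s : Fin n → ℕ) (hs : ∀ i, 1 ≤ s i)
    (iotahat : HatTm U s →* Multiplicative G)
    (j : Fin n) :
    ((s j = 1) →
      ∀ (a b : U j × Multiplicative (Fin (s j) →₀ ℕ))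
        (haD : a ∈ seminormalD (U j) (s j)) (hbD : b ∈ seminormalD (U j) (s j))
        (haB : ((1 : FreeCM G),
            Pi.mulSingle j (⟨a, haD⟩ : ↥(seminormalD (U j) (s j)))) ∈
          TBlock G U s (iotahat.comp (embedT U s)))
        (hbB : ((1 : FreeCM G),
            Pi.mulSingle j (⟨b, hbD⟩ : ↥(seminormalD (U j) (s j)))) ∈
          TBlock G U s (iotahat.comp (embedT U s))),
        Irreducible (⟨_, haB⟩ : ↥(TBlock G U s (iotahat.comp (embedT U s)))) →
        Irreducible (⟨_, hbB⟩ : ↥(TBlock G U s (iotahat.comp (embedT U s)))) →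
        ∃ ε : U j, b = (ε, 1) * a) ∧
    ((2 ≤ s j) →
      ∀ (a : U j × Multiplicative (Fin (s j) →₀ ℕ))
        (haD : a ∈ seminormalD (U j) (s j))
        (haB : ((1 : FreeCM G),
            Pi.mulSingle j (⟨a, haD⟩ : ↥(seminormalD (U j) (s j)))) ∈
          TBlock G U s (iotahat.comp (embedT U s))),
        a ≠ 1 →
        sInf (lengthSet (⟨_, haB⟩ : ↥(TBlock G U s (iotahat.comp (embedT U s))))) ≤
          (if dval U s iotahat e j = 2 then 3 else 2)) := by
  have : ∀ ν, NeZero (s ν) := fun ν => ⟨Nat.one_le_iff_ne_zero.mp (hs ν)⟩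
  refine ⟨fun hs1 a b haD hbD haB hbB ha hb => ?_, fun hs2 a haD haB ha1 => ?_⟩
  · exact exists_eq_mul_of_irreducible hs1
      (x := ⟨a, mem_localBlock_of_mk_mulSingle_mem iotahat j haB⟩)
      (y := ⟨b, mem_localBlock_of_mk_mulSingle_mem iotahat j hbB⟩)
      ((irreducible_toTBlock_iff iotahat j).mp ha) ((irreducible_toTBlock_iff iotahat j).mp hb)
  have hfac := (factorsIntoAtMost_of_ne_one hcard he hs2
    (a := ⟨a, mem_localBlock_of_mk_mulSingle_mem iotahat j haB⟩)
    fun h => ha1 (congrArg Subtype.val h)).map fun _ => (irreducible_toTBlock_iff iotahat j).mpr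
  refine hfac.sInf_lengthSet_le.trans ?_
  split_ifs with hd h h
  · exact le_rfl
  · exact absurd (dval_eq_two iotahat j hd) h
  all_goals omega

/-- Assertion A2 in the proof of Theorem 3.3. (1) If `s_j = 1` and `a, b ∈ D_j ∩ A(B)`,
then `b = ε a` for some `ε ∈ D̂_j^×`. (2) If `s_j ≥ 2` and `1 ≠ a ∈ D_j ∩ B`, then
`min L_B(a) ≤ 3` if `d_j = 2`, and `min L_B(a) ≤ 2` otherwise. -/
theorem tblock_order_two_local_lengths
    {G : Type*} [AddCommGroup G] [Fintype G] (hcard : Fintype.card G = 2)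
    (e : G) (he : e ≠ 0)
    {n : ℕ} (hn : 0 < n) (U : Fin n → Type*) [∀ i, CommGroup (U i)]
    (s : Fin n → ℕ) (hs : ∀ i, 1 ≤ s i)
    (iotahat : HatTm U s →* Multiplicative G)
    (hnf : ∀ ν : Fin n, ¬ IsFactorialMonoid ↥(seminormalD (U ν) (s ν)))
    (j : Fin n) :
    ((s j = 1) →
      ∀ (a b : U j × Multiplicative (Fin (s j) →₀ ℕ))
        (haD : a ∈ seminormalD (U j) (s j)) (hbD : b ∈ seminormalD (U j) (s j))
        (haB : ((1 : FreeCM G),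
            Pi.mulSingle j (⟨a, haD⟩ : ↥(seminormalD (U j) (s j)))) ∈
          TBlock G U s (iotahat.comp (embedT U s)))
        (hbB : ((1 : FreeCM G),
            Pi.mulSingle j (⟨b, hbD⟩ : ↥(seminormalD (U j) (s j)))) ∈
          TBlock G U s (iotahat.comp (embedT U s))),
        Irreducible (⟨_, haB⟩ : ↥(TBlock G U s (iotahat.comp (embedT U s)))) →
        Irreducible (⟨_, hbB⟩ : ↥(TBlock G U s (iotahat.comp (embedT U s)))) →
        ∃ ε : U j, b = (ε, 1) * a) ∧
    ((2 ≤ s j) →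
      ∀ (a : U j × Multiplicative (Fin (s j) →₀ ℕ))
        (haD : a ∈ seminormalD (U j) (s j))
        (haB : ((1 : FreeCM G),
            Pi.mulSingle j (⟨a, haD⟩ : ↥(seminormalD (U j) (s j)))) ∈
          TBlock G U s (iotahat.comp (embedT U s))),
        a ≠ 1 →
        sInf (lengthSet (⟨_, haB⟩ : ↥(TBlock G U s (iotahat.comp (embedT U s))))) ≤
          (if dval U s iotahat e j = 2 then 3 else 2)) :=
  tblock_order_two_local_lengths_general hcard e he U s hs iotahat j

end
end ArXivSeminormal
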